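/- arXiv:0907.2762 — 3 statements merged into one kernel-verified Lean document; each statement's English description precedes it below -/
import Mathlib

section
/- Let Λ be the ring of integers of a number field, m ∈ Λ nonzero, 𝔭 a prime of Λ, and n ≥ 2. For every transvection U = Iₙ + a·E_{i,j} (i ≠ j, a ∈ Λ_𝔭) in GLₙ(Λ_𝔭) there exists U' ∈ GLₙ(Λ) with U' ≡ U mod m·Λ_𝔭 and U' ≡ Iₙ mod m·Λ_𝔮 for all primes 𝔮 ≠ 𝔭. -/
/-!
Choose `b ∈ Λ` with `b ≡ a mod m` at `𝔭` and `b ≡ 0 mod m` at every other prime; then the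
integral transvection `1 + b E_{i,j}` (with inverse `1 - b E_{i,j}`) does the job. Such a `b` is
`c t`, where `c ∈ Λ` approximates `a` (`Λ` is dense in `Λ_𝔭`) and `t` comes from writing
`(m) = 𝔭^E M` with `𝔭 ∤ M` and splitting `1 = x + t` with `x ∈ 𝔭^E`, `t ∈ M`.
-/

open IsDedekindDomain

theorem Valued.setOf_valued_sub_lt_mem_nhds {A Γ₀ : Type*} [Ring A]
    [LinearOrderedCommGroupWithZero Γ₀] [Valued A Γ₀] {z : A} (hz : Valued.v z ≠ 0) (x : A) :
    {y | Valued.v (y - x) < Valued.v z} ∈ nhds x :=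
  Valued.mem_nhds.mpr ⟨Units.mk0 _ (Valued.v.restrict_eq_zero_iff.not.mpr hz),
    fun _ hy ↦ Valued.v.restrict_lt_iff.mp hy⟩

theorem Valuation.map_transvection_sub_transvection_le {A S Γ₀ : Type*} [CommRing A] [CommRing S]
    [LinearOrderedCommMonoidWithZero Γ₀] (f : A →+* S) (ν : Valuation S Γ₀) {n : Type*}
    [DecidableEq n] (i j : n) (b : A) (c : S) (k l : n) :
    ν (f (Matrix.transvection i j b k l) - Matrix.transvection i j c k l) ≤ ν (f b - c) := by
  simp only [Matrix.transvection, Matrix.add_apply, Matrix.one_apply, Matrix.single_apply]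
  split_ifs <;> simp

namespace IsDedekindDomain.HeightOneSpectrum

variable {R : Type*} [CommRing R] [IsDedekindDomain R] {K : Type*} [Field K] [Algebra R K]
  [IsFractionRing R K]

theorem valued_algebraMap_adicCompletion (v : HeightOneSpectrum R) (r : R) :
    Valued.v (algebraMap R (v.adicCompletion K) r) = v.intValuation r := by
  rw [← valuation_of_algebraMap (K := K), ← valuedAdicCompletion_eq_valuation]

theorem intValuation_le_of_forall_pow_dvd (v : HeightOneSpectrum R) {r s : R} (hs : s ≠ 0)
    (h : ∀ n : ℕ, v.asIdeal ^ n ∣ Ideal.span {s} → v.asIdeal ^ n ∣ Ideal.span {r}) :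
    v.intValuation r ≤ v.intValuation s := by
  rw [v.intValuation_eq_exp_neg_multiplicity hs, intValuation_le_pow_iff_dvd]
  exact h _ (pow_multiplicity_dvd _ _)

theorem exists_span_singleton_eq_pow_multiplicity_mul (v : HeightOneSpectrum R) {r : R}
    (hr : r ≠ 0) : ∃ M : Ideal R, ¬ v.asIdeal ∣ M ∧
      Ideal.span {r} = v.asIdeal ^ multiplicity v.asIdeal (Ideal.span {r}) * M := by
  obtain ⟨M, hM⟩ := pow_multiplicity_dvd v.asIdeal (Ideal.span {r})
  refine ⟨M, fun ⟨N, hN⟩ ↦ ?_, hM⟩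
  have hfin : FiniteMultiplicity v.asIdeal (Ideal.span {r}) :=
    .of_prime_left v.prime (by simpa [Ideal.zero_eq_bot] using hr)
  exact hfin.not_pow_dvd_of_multiplicity_lt (Nat.lt_succ_self _)
    ⟨N, hM.trans (by rw [hN, pow_succ, mul_assoc])⟩

theorem not_asIdeal_dvd_pow {v w : HeightOneSpectrum R} (hwv : w ≠ v) (n : ℕ) :
    ¬ w.asIdeal ∣ v.asIdeal ^ n := fun h ↦
  hwv <| HeightOneSpectrum.ext <|
    (v.isMaximal.eq_of_le w.isPrime.ne_top (Ideal.le_of_dvd (w.prime.dvd_of_dvd_pow h))).symm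

theorem sup_eq_top_of_not_dvd (v : HeightOneSpectrum R) {M : Ideal R} (hvM : ¬ v.asIdeal ∣ M) :
    v.asIdeal ⊔ M = ⊤ := by
  by_contra h
  exact hvM (Ideal.dvd_iff_le.mpr (le_sup_right.trans (v.isMaximal.eq_of_le h le_sup_left).ge))

theorem exists_intValuation_one_sub_le_and_intValuation_le (v : HeightOneSpectrum R) {m : R}
    (hm : m ≠ 0) : ∃ t : R, v.intValuation (1 - t) ≤ v.intValuation m ∧
      ∀ w : HeightOneSpectrum R, w ≠ v → w.intValuation t ≤ w.intValuation m := by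
  obtain ⟨M, hvM, hm_eq⟩ := v.exists_span_singleton_eq_pow_multiplicity_mul hm
  set E := multiplicity v.asIdeal (Ideal.span {m})
  have hcop : IsCoprime (v.asIdeal ^ E) M :=
    (Ideal.isCoprime_iff_sup_eq.mpr (v.sup_eq_top_of_not_dvd hvM)).pow_left
  obtain ⟨x, hx, t, ht, hxt⟩ := Ideal.isCoprime_iff_exists.mp hcop
  refine ⟨t, ?_, fun w hwv ↦ w.intValuation_le_of_forall_pow_dvd hm fun n hn ↦ ?_⟩
  · rw [v.intValuation_eq_exp_neg_multiplicity hm, intValuation_le_pow_iff_mem,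
      ← eq_sub_of_add_eq hxt]
    exact hx
  · rw [hm_eq] at hn
    exact (w.prime.pow_dvd_of_dvd_mul_left n (not_asIdeal_dvd_pow hwv E) hn).trans
      (Ideal.dvd_span_singleton.mpr ht)

theorem exists_valued_algebraMap_sub_lt (v : HeightOneSpectrum R) {a : v.adicCompletion K}
    (ha : a ∈ v.adicCompletionIntegers K) {z : v.adicCompletion K} (hz : Valued.v z ≠ 0) :
    ∃ c : R, Valued.v (algebraMap R (v.adicCompletion K) c - a) < Valued.v z := by
  obtain ⟨_, ⟨k, rfl⟩, hkz, hk1⟩ := (denseRange_algebraMap (K := K) (v := v)).inter_nhds_nonempty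
    (Filter.inter_mem (Valued.setOf_valued_sub_lt_mem_nhds hz a)
      (Valued.setOf_valued_sub_lt_mem_nhds (z := 1) (by simp) a))
  have hval (x : K) : Valued.v (algebraMap K (v.adicCompletion K) x) = v.valuation K x :=
    valuedAdicCompletion_eq_valuation' v x
  have hk : v.valuation K k ≤ 1 := by
    rw [← hval, ← sub_add_cancel (algebraMap K (v.adicCompletion K) k) a]
    exact Valued.v.map_add_le (le_of_lt (by simpa using hk1)) ha
  obtain ⟨c, hc⟩ := v.exists_valuation_sub_lt_of_integer hk (Units.mk0 _ hz)
  refine ⟨c, ?_⟩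
  rw [← sub_add_sub_cancel _ (algebraMap K (v.adicCompletion K) k),
    IsScalarTower.algebraMap_apply R K, ← map_sub]
  exact Valued.v.map_add_lt (by rwa [hval]) hkz

theorem exists_valued_sub_le_and_forall_ne_valued_le (v : HeightOneSpectrum R) {m : R}
    (hm : m ≠ 0) {a : v.adicCompletion K} (ha : a ∈ v.adicCompletionIntegers K) :
    ∃ b : R, Valued.v (algebraMap R (v.adicCompletion K) b - a) ≤
        Valued.v (algebraMap R (v.adicCompletion K) m) ∧
      ∀ w : HeightOneSpectrum R, w ≠ v → Valued.v (algebraMap R (w.adicCompletion K) b) ≤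
        Valued.v (algebraMap R (w.adicCompletion K) m) := by
  have hm' : Valued.v (algebraMap R (v.adicCompletion K) m) ≠ 0 := by
    rw [valued_algebraMap_adicCompletion]
    exact v.intValuation_ne_zero m hm
  obtain ⟨c, hc⟩ := v.exists_valued_algebraMap_sub_lt ha hm'
  obtain ⟨t, ht_v, ht_w⟩ := v.exists_intValuation_one_sub_le_and_intValuation_le hm
  refine ⟨c * t, ?_, fun w hwv ↦ ?_⟩
  · have hsplit : algebraMap R (v.adicCompletion K) (c * t) - a =
        -algebraMap R (v.adicCompletion K) (c * (1 - t)) + (algebraMap R _ c - a) := by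
      simp only [map_mul, map_sub, map_one]
      ring
    rw [hsplit]
    refine Valued.v.map_add_le ?_ hc.le
    rw [Valuation.map_neg, valued_algebraMap_adicCompletion, valued_algebraMap_adicCompletion,
      map_mul]
    exact (mul_le_of_le_one_left' (v.intValuation_le_one c)).trans ht_v
  · rw [valued_algebraMap_adicCompletion, valued_algebraMap_adicCompletion, map_mul]
    exact (mul_le_of_le_one_left' (w.intValuation_le_one c)).trans (ht_w w hwv)

end IsDedekindDomain.HeightOneSpectrum

theorem stmt5_general (Λ : Type*) [CommRing Λ] [IsDedekindDomain Λ]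
    (K : Type*) [Field K] [Algebra Λ K] [IsFractionRing Λ K]
    (m : Λ) (hm : m ≠ 0) (v : HeightOneSpectrum Λ)
    (n : ℕ) (i j : Fin n) (hij : i ≠ j)
    (a : v.adicCompletion K) (ha : a ∈ v.adicCompletionIntegers K) :
    ∃ U' : (Matrix (Fin n) (Fin n) Λ)ˣ,
      (∀ k l : Fin n,
        Valued.v (algebraMap Λ (v.adicCompletion K) (U'.val k l)
            - (1 + a • Matrix.single i j (1 : v.adicCompletion K)) k l)
          ≤ Valued.v (algebraMap Λ (v.adicCompletion K) m)) ∧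
      ∀ w : HeightOneSpectrum Λ, w ≠ v → ∀ k l : Fin n,
        Valued.v (algebraMap Λ (w.adicCompletion K) (U'.val k l)
            - (1 : Matrix (Fin n) (Fin n) (w.adicCompletion K)) k l)
          ≤ Valued.v (algebraMap Λ (w.adicCompletion K) m) := by
  obtain ⟨b, hb_v, hb_w⟩ := v.exists_valued_sub_le_and_forall_ne_valued_le hm ha
  refine ⟨Matrix.SpecialLinearGroup.toGL (.transvection hij b), fun k l ↦ ?_, fun w hwv k l ↦ ?_⟩
  · rw [Matrix.smul_single, smul_eq_mul, mul_one, ← Matrix.transvection]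
    exact (Valued.v.map_transvection_sub_transvection_le _ i j b a k l).trans hb_v
  · rw [← Matrix.transvection_zero i j]
    refine (Valued.v.map_transvection_sub_transvection_le _ i j b 0 k l).trans ?_
    simpa using hb_w w hwv

/-- Approximation of transvections: let `Λ` be a Dedekind domain (e.g. the
ring of integers of a number field), `m ≠ 0`, `𝔭` a prime, `n ≥ 2`.  For every
transvection `U = Iₙ + a • E i j` (`i ≠ j`, `a ∈ Λ_𝔭`) over the completion
`Λ_𝔭` there is `U' ∈ GLₙ(Λ)` with `U' ≡ U mod m·Λ_𝔭` (entrywise) and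
`U' ≡ Iₙ mod m·Λ_𝔮` for all primes `𝔮 ≠ 𝔭`.  Congruence modulo `m` is
expressed through the valuations of the completions. -/
theorem stmt5 (Λ : Type*) [CommRing Λ] [IsDedekindDomain Λ]
    (K : Type*) [Field K] [Algebra Λ K] [IsFractionRing Λ K]
    (m : Λ) (hm : m ≠ 0) (v : HeightOneSpectrum Λ)
    (n : ℕ) (hn : 2 ≤ n) (i j : Fin n) (hij : i ≠ j)
    (a : v.adicCompletion K) (ha : a ∈ v.adicCompletionIntegers K) :
    ∃ U' : (Matrix (Fin n) (Fin n) Λ)ˣ,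
      (∀ k l : Fin n,
        Valued.v (algebraMap Λ (v.adicCompletion K) (U'.val k l)
            - (1 + a • Matrix.single i j (1 : v.adicCompletion K)) k l)
          ≤ Valued.v (algebraMap Λ (v.adicCompletion K) m)) ∧
      ∀ w : HeightOneSpectrum Λ, w ≠ v → ∀ k l : Fin n,
        Valued.v (algebraMap Λ (w.adicCompletion K) (U'.val k l)
            - (1 : Matrix (Fin n) (Fin n) (w.adicCompletion K)) k l)
          ≤ Valued.v (algebraMap Λ (w.adicCompletion K) m) :=
  stmt5_general Λ K m hm v n i j hij a ha
end

section
/- Let Λ be the ring of integers of a number field. Given nonzero integral ideals e₁ ∣ e₂ ∣ … ∣ eₙ of Λ, there exists a matrix M ∈ Matₙ(Λ) invertible over the field of fractions whose k-th determinantal divisor equals e₁e₂⋯e_k for every k, if and only if the product e₁e₂⋯eₙ is a principal ideal. -/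
/-- The `k`-th determinantal divisor of `M`: the ideal generated by all
`k × k` minors of `M`. -/
def detDiv {Λ : Type*} [CommRing Λ] {n : ℕ} (k : ℕ)
    (M : Matrix (Fin n) (Fin n) Λ) : Ideal Λ :=
  Ideal.span { d | ∃ f g : Fin k → Fin n,
    Function.Injective f ∧ Function.Injective g ∧ d = (M.submatrix f g).det }

open NumberField

/-!
Necessity: `detDiv n M` is generated by `det M`. Sufficiency: if `∏ eᵢ` is principal, the lattice
`e₀ ⊕ ⋯ ⊕ eₙ₋₁ ⊆ Kⁿ` is free, by iterating Steinitz's relation `a ⊕ b ≅ 𝓞 K ⊕ ab`. The relation is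
realised inside `Kⁿ` by a unimodular change of basis built from `x ∈ a` and `y ∈ b` with
`(x) = a s`, `(y) = b t` and `s + t = 1`; such a `y` exists because `b` has elements avoiding
`b p` for each of the finitely many primes `p ⊇ s`. Let the columns of `M` be a basis of the
lattice. Its `i`-th row lies in `eᵢ`, so a `k × k` minor lies in a product of `k` distinct `eᵢ`,
hence in `e₀ ⋯ eₖ₋₁` by the divisibility chain. Conversely, for `dᵢ ∈ eᵢ` there is `N` with
`M N = diag d`; the minors of `M N` lie in `detDiv k M` by the Cauchy–Binet expansion, and
`d₀ ⋯ dₖ₋₁` is one of them. The same identity with all `dᵢ ≠ 0` gives `det M ≠ 0`.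
-/

open Matrix Finset Function Submodule

section Order

variable {n : ℕ}

theorem iSup_fin_succ {α : Type*} [CompleteLattice α] {m : ℕ} (f : Fin (m + 1) → α) :
    ⨆ i, f i = f 0 ⊔ ⨆ i : Fin m, f i.succ := by
  rw [← sSup_range, ← sSup_range, ← sSup_insert, ← Fin.range_cons]
  exact congrArg (sSup ∘ Set.range) (Fin.cons_self_tail f).symm

theorem prod_Iic_eq_prod_castLE {M : Type*} [CommMonoid M] (k : Fin n) (f : Fin n → M) :
    ∏ i ∈ Iic k, f i = ∏ i : Fin (k + 1), f (Fin.castLE k.isLt i) := by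
  have h := Fin.prod_Iic_castLE k.isLt f (Fin.last k)
  rwa [show Fin.castLE k.isLt (Fin.last k) = k from Fin.ext rfl, ← Fin.top_eq_last, Iic_top] at h

theorem Fin.val_le_of_strictMono {m : ℕ} {g : Fin m → Fin n} (hg : StrictMono g) (i : Fin m) :
    (i : ℕ) ≤ g i := by
  simpa using card_le_card_of_injOn g
    (fun j hj => mem_coe.2 (mem_Iio.2 (hg (mem_Iio.1 (mem_coe.1 hj))))) hg.injective.injOn

theorem prod_le_prod_Iic_of_antitone {M : Type*} [CommMonoid M] [Preorder M] [MulLeftMono M]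
    {e : Fin n → M} (he : Antitone e) (k : Fin n) {f : Fin (k + 1) → Fin n} (hf : Injective f) :
    ∏ i, e (f i) ≤ ∏ i ∈ Iic k, e i := by
  classical
  set S := univ.image f
  have hS : #S = k + 1 := by simp [S, card_image_of_injective _ hf]
  calc ∏ i, e (f i) = ∏ s ∈ S, e s := (prod_image fun a _ b _ h => hf h).symm
    _ = ∏ i, e (S.orderEmbOfFin hS i) :=
      (congrArg (∏ s ∈ ·, e s) (map_orderEmbOfFin_univ S hS).symm).trans (prod_map _ _ _)
    _ ≤ ∏ i, e (Fin.castLE k.isLt i) :=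
      prod_le_prod' fun i _ => he (Fin.val_le_of_strictMono (S.orderEmbOfFin hS).strictMono i)
    _ = ∏ i ∈ Iic k, e i := (prod_Iic_eq_prod_castLE k e).symm

end Order

section Minors

variable {R : Type*} [CommRing R]

theorem det_mul_eq_sum_mul_det_submatrix {m ι : Type*} [Fintype m] [DecidableEq m] [Fintype ι]
    (A : Matrix m ι R) (B : Matrix ι m R) :
    (A * B).det = ∑ p : m → ι, (∏ i, B (p i) i) * (A.submatrix id p).det := by
  simp only [det_apply, mul_apply, prod_univ_sum, Finset.mul_sum, Fintype.piFinset_univ,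
    Finset.smul_sum]
  rw [Finset.sum_comm]
  refine Finset.sum_congr rfl fun p _ => Finset.sum_congr rfl fun σ _ => ?_
  simp only [submatrix_apply, id, Finset.prod_mul_distrib]
  rw [← (Equiv.prod_comp σ fun i => B (p i) i)]
  simp only [Units.smul_def, zsmul_eq_mul]
  ring

theorem det_mul_mem_of_det_submatrix_mem {m ι : Type*} [Fintype m] [DecidableEq m] [Fintype ι]
    {A : Matrix m ι R} (B : Matrix ι m R) {J : Ideal R}
    (hA : ∀ p : m → ι, Injective p → (A.submatrix id p).det ∈ J) : (A * B).det ∈ J := by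
  rw [det_mul_eq_sum_mul_det_submatrix]
  refine J.sum_mem fun p _ => J.mul_mem_left _ ?_
  by_cases hp : Injective p
  · exact hA p hp
  · obtain ⟨i, j, hij, hne⟩ := Function.not_injective_iff.1 hp
    rw [det_zero_of_column_eq hne fun k => by simp [hij]]
    exact J.zero_mem

variable {n : ℕ}

theorem det_submatrix_mem_detDiv (M : Matrix (Fin n) (Fin n) R) {k : ℕ} {f g : Fin k → Fin n}
    (hf : Injective f) (hg : Injective g) : (M.submatrix f g).det ∈ detDiv k M :=
  Ideal.subset_span ⟨f, g, hf, hg, rfl⟩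

theorem detDiv_self (M : Matrix (Fin n) (Fin n) R) : detDiv n M = Ideal.span {M.det} := by
  refine le_antisymm (Ideal.span_le.2 ?_) ?_
  · rintro _ ⟨f, g, hf, hg, rfl⟩
    let ef := Equiv.ofBijective f (Finite.injective_iff_bijective.1 hf)
    let eg := Equiv.ofBijective g (Finite.injective_iff_bijective.1 hg)
    have : M.submatrix f g = (M.submatrix (eg.symm.trans ef) id).submatrix eg eg := by
      ext i j; simp [ef, eg]
    rw [SetLike.mem_coe, this, det_submatrix_equiv_self, det_permute, Ideal.mem_span_singleton]
    exact dvd_mul_left _ _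
  · simpa [Ideal.span_le] using det_submatrix_mem_detDiv M injective_id injective_id

theorem detDiv_mul_right_le (M N : Matrix (Fin n) (Fin n) R) (k : ℕ) :
    detDiv k (M * N) ≤ detDiv k M := by
  refine Ideal.span_le.2 ?_
  rintro _ ⟨f, g, hf, hg, rfl⟩
  rw [SetLike.mem_coe, submatrix_mul M N f id g bijective_id]
  exact det_mul_mem_of_det_submatrix_mem _ fun p hp => by
    simpa using det_submatrix_mem_detDiv M hf hp

theorem prod_Iic_mem_detDiv_diagonal (d : Fin n → R) (k : Fin n) :
    ∏ i ∈ Iic k, d i ∈ detDiv (k + 1) (diagonal d) := by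
  rw [prod_Iic_eq_prod_castLE]
  have hf := Fin.castLE_injective k.isLt
  simpa [submatrix_diagonal _ _ hf] using det_submatrix_mem_detDiv (diagonal d) hf hf

theorem det_mem_prod_of_mem {m : Type*} [Fintype m] [DecidableEq m] {I : m → Ideal R}
    {A : Matrix m m R} (hA : ∀ i j, A i j ∈ I i) : A.det ∈ ∏ i, I i := by
  rw [det_apply]
  refine Ideal.sum_mem _ fun σ _ => ?_
  rw [Units.smul_def, zsmul_eq_mul, ← Equiv.prod_comp σ I]
  exact Ideal.mul_mem_left _ _ (Ideal.prod_mem_prod fun i _ => hA (σ i) i)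

open scoped Pointwise in
theorem Ideal.prod_le_of_forall_prod_mem {ι : Type*} {s : Finset ι} {I : ι → Ideal R}
    {J : Ideal R} (h : ∀ x : ι → R, (∀ i ∈ s, x i ∈ I i) → ∏ i ∈ s, x i ∈ J) :
    ∏ i ∈ s, I i ≤ J := by
  have hspan : ∏ i ∈ s, I i = Ideal.span (∏ i ∈ s, (I i : Set R)) := by
    simp_rw [← Ideal.prod_span, Ideal.span_eq]
  rw [hspan, Ideal.span_le]
  intro a ha
  obtain ⟨x, hx, rfl⟩ := (Set.mem_finsetProd _ _ _).1 ha
  exact h x fun i hi => hx hi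

variable {e : Fin n → Ideal R} {M : Matrix (Fin n) (Fin n) R}

theorem detDiv_succ_le_prod_Iic (he : Antitone e) (hMe : ∀ i j, M i j ∈ e i) (k : Fin n) :
    detDiv (k + 1) M ≤ ∏ i ∈ Iic k, e i := by
  refine Ideal.span_le.2 ?_
  rintro _ ⟨f, g, hf, -, rfl⟩
  exact prod_le_prod_Iic_of_antitone he k hf (det_mem_prod_of_mem fun i j => hMe (f i) (g j))

theorem prod_Iic_le_detDiv_succ
    (hMd : ∀ d : Fin n → R, (∀ i, d i ∈ e i) → ∃ N, M * N = diagonal d) (k : Fin n) :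
    ∏ i ∈ Iic k, e i ≤ detDiv (k + 1) M := by
  refine Ideal.prod_le_of_forall_prod_mem fun d hd => ?_
  obtain ⟨N, hN⟩ := hMd (fun i => if i ≤ k then d i else 0) fun i => by
    split_ifs with hi
    exacts [hd i (mem_Iic.2 hi), zero_mem _]
  refine detDiv_mul_right_le M N _ ?_
  rw [hN]
  convert prod_Iic_mem_detDiv_diagonal _ k using 1
  exact prod_congr rfl fun i hi => (if_pos (mem_Iic.1 hi)).symm

theorem detDiv_succ_eq_prod_Iic (he : Antitone e) (hMe : ∀ i j, M i j ∈ e i)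
    (hMd : ∀ d : Fin n → R, (∀ i, d i ∈ e i) → ∃ N, M * N = diagonal d) (k : Fin n) :
    detDiv (k + 1) M = ∏ i ∈ Iic k, e i :=
  le_antisymm (detDiv_succ_le_prod_Iic he hMe k) (prod_Iic_le_detDiv_succ hMd k)

theorem det_ne_zero_of_forall_exists_mul_eq_diagonal [IsDomain R] (he : ∀ i, e i ≠ ⊥)
    (hMd : ∀ d : Fin n → R, (∀ i, d i ∈ e i) → ∃ N, M * N = diagonal d) : M.det ≠ 0 := by
  choose d hd hd0 using fun i => Submodule.exists_mem_ne_zero_of_ne_bot (he i)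
  obtain ⟨N, hN⟩ := hMd d hd
  have hdet : M.det * N.det ≠ 0 := by
    rw [← det_mul, hN, det_diagonal]
    exact prod_ne_zero_iff.2 fun i _ => hd0 i
  exact left_ne_zero_of_mul hdet

theorem isPrincipal_prod_of_detDiv_succ_eq
    (hM : ∀ k : Fin n, detDiv (k + 1) M = ∏ i ∈ Iic k, e i) : (∏ i, e i).IsPrincipal := by
  cases n with
  | zero => exact ⟨⟨1, by simp⟩⟩
  | succ m =>
    have h := hM ⊤
    rw [Iic_top, Fin.top_eq_last, Fin.val_last, detDiv_self] at h
    exact ⟨⟨M.det, h.symm⟩⟩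

end Minors

section Dedekind

variable {R : Type*} [CommRing R] [IsDedekindDomain R]

theorem Ideal.exists_mem_forall_notMem_mul {P : Finset (Ideal R)} (hP : ∀ p ∈ P, p.IsMaximal)
    {b : Ideal R} (hb : b ≠ ⊥) : ∃ y ∈ b, ∀ p ∈ P, y ∉ b * p := by
  classical
  have key : ∀ p ∈ P, ∃ y ∈ b * ∏ q ∈ P.erase p, q, y ∉ b * p := by
    intro p hp
    by_contra! h
    have hle : ∏ q ∈ P.erase p, q ≤ p := by
      rw [← Ideal.dvd_iff_le, ← mul_dvd_mul_iff_left hb, Ideal.dvd_iff_le]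
      exact h
    obtain ⟨q, hq, hqp⟩ := (hP p hp).isPrime.prod_le.1 hle
    exact ne_of_mem_erase hq ((hP q (mem_of_mem_erase hq)).eq_of_le (hP p hp).ne_top hqp)
  choose! y hyb hyp using key
  -- `y p` lies in `b * q` for every `q ∈ P` other than `p`, so the sum avoids every `b * p`.
  refine ⟨∑ p ∈ P, y p, Ideal.sum_mem _ fun p hp => Ideal.mul_le_left (hyb p hp),
    fun p hp hmem => ?_⟩
  have hrest : ∑ q ∈ P.erase p, y q ∈ b * p := by
    refine Ideal.sum_mem _ fun q hq => ?_
    have hle : b * ∏ r ∈ P.erase q, r ≤ b * p := Ideal.mul_mono_right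
      (Ideal.le_of_dvd (dvd_prod_of_mem _ (mem_erase.2 ⟨(ne_of_mem_erase hq).symm, hp⟩)))
    exact hle (hyb q (mem_of_mem_erase hq))
  rw [← add_sum_erase _ _ hp] at hmem
  exact hyp p hp (by simpa using (b * p).sub_mem hmem hrest)

open UniqueFactorizationMonoid in
theorem Ideal.exists_span_singleton_eq_mul_sup_eq_top {b s : Ideal R} (hb : b ≠ ⊥)
    (hs : s ≠ ⊥) : ∃ y ≠ 0, ∃ t, Ideal.span {y} = b * t ∧ s ⊔ t = ⊤ := by
  classical
  set P := (normalizedFactors s).toFinset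
  have hP : ∀ p, p ∈ P ↔ p.IsPrime ∧ s ≤ p := fun p => by
    rw [Multiset.mem_toFinset, Ideal.mem_normalizedFactors_iff hs]
  obtain ⟨y, hyb, hy0, hy⟩ : ∃ y ∈ b, y ≠ 0 ∧ ∀ p ∈ P, y ∉ b * p := by
    rcases eq_or_ne s ⊤ with rfl | hs'
    · obtain ⟨y, hyb, hy0⟩ := Submodule.exists_mem_ne_zero_of_ne_bot hb
      refine ⟨y, hyb, hy0, fun p hp => absurd (top_le_iff.1 ((hP p).1 hp).2) ?_⟩
      exact ((hP p).1 hp).1.ne_top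
    · have hPmax : ∀ p ∈ P, p.IsMaximal := fun p hp =>
        ((hP p).1 hp).1.isMaximal (ne_bot_of_le_ne_bot hs ((hP p).1 hp).2)
      obtain ⟨y, hyb, hy⟩ := exists_mem_forall_notMem_mul hPmax hb
      obtain ⟨m, hm, hsm⟩ := exists_le_maximal s hs'
      exact ⟨y, hyb, fun h0 => hy m ((hP m).2 ⟨hm.isPrime, hsm⟩) (h0 ▸ zero_mem _), hy⟩
  obtain ⟨t, ht⟩ := Ideal.dvd_span_singleton.2 hyb
  refine ⟨y, hy0, t, ht, by_contra fun hne => ?_⟩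
  obtain ⟨m, hm, hle⟩ := exists_le_maximal _ hne
  refine hy m ((hP m).2 ⟨hm.isPrime, le_sup_left.trans hle⟩) ?_
  exact Ideal.mul_mono_right (le_sup_right.trans hle) (ht ▸ mem_span_singleton_self y)

end Dedekind

section Steinitz

variable {R F V : Type*} [CommRing R] [Field F] [Algebra R F] [FaithfulSMul R F]
  [AddCommGroup V] [Module F V] [Module R V] [IsScalarTower R F V]

theorem ideal_smul_span_le_span_sup_mul_smul_span {c₀ c₁ s : Ideal R} {x y σ τ : R}
    (hx : Ideal.span {x} = c₀ * s) (hy : y ∈ c₁) (hσ : σ ∈ s) (hστ : σ + τ = 1)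
    (hx0 : x ≠ 0) (hy0 : y ≠ 0) (v₀ v₁ : V) :
    c₀ • span R {v₀} ≤ span R {x • v₀ + y • v₁} ⊔
      (c₀ * c₁) • span R {(algebraMap R F σ / algebraMap R F x) • v₁ -
        (algebraMap R F τ / algebraMap R F y) • v₀} := by
  intro z hz
  obtain ⟨p, hp, rfl⟩ := mem_smul_span_singleton.1 hz
  obtain ⟨r, hr⟩ := Ideal.mem_span_singleton'.1 (hx ▸ Ideal.mul_mem_mul hp hσ)
  have hx' : algebraMap R F x ≠ 0 := (FaithfulSMul.algebraMap_eq_zero_iff R F).not.2 hx0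
  have hy' : algebraMap R F y ≠ 0 := (FaithfulSMul.algebraMap_eq_zero_iff R F).not.2 hy0
  have hr' : algebraMap R F r * algebraMap R F x = algebraMap R F p * algebraMap R F σ := by
    rw [← map_mul, ← map_mul, hr]
  have hστ' : algebraMap R F σ + algebraMap R F τ = 1 := by rw [← map_add, hστ, map_one]
  have key : r • (x • v₀ + y • v₁) + (-(p * y)) • ((algebraMap R F σ / algebraMap R F x) • v₁ -
      (algebraMap R F τ / algebraMap R F y) • v₀) = p • v₀ := by
    match_scalars
    · field_simp
      linear_combination hr' + algebraMap R F p * hστ'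
    · field_simp
      linear_combination algebraMap R F y * hr'
  rw [← key]
  exact add_mem (mem_sup_left (smul_mem _ r (mem_span_singleton_self _)))
    (mem_sup_right (mem_smul_span_singleton.2 ⟨_, neg_mem (Ideal.mul_mem_mul hp hy), rfl⟩))

theorem mul_smul_span_le_ideal_smul_span_sup {c₀ c₁ s t : Ideal R} {x y σ τ : R}
    (hx : Ideal.span {x} = c₀ * s) (hy : Ideal.span {y} = c₁ * t) (hσ : σ ∈ s) (hτ : τ ∈ t)
    (hx0 : x ≠ 0) (hy0 : y ≠ 0) (v₀ v₁ : V) :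
    (c₀ * c₁) • span R {(algebraMap R F σ / algebraMap R F x) • v₁ -
      (algebraMap R F τ / algebraMap R F y) • v₀} ≤ c₀ • span R {v₀} ⊔ c₁ • span R {v₁} := by
  intro z hz
  obtain ⟨a, ha, rfl⟩ := mem_smul_span_singleton.1 hz
  have haτ : a * τ ∈ Ideal.span {y} * c₀ := by
    rw [show Ideal.span {y} * c₀ = c₀ * c₁ * t by rw [hy]; ring]
    exact Ideal.mul_mem_mul ha hτ
  have haσ : a * σ ∈ Ideal.span {x} * c₁ := by
    rw [show Ideal.span {x} * c₁ = c₀ * c₁ * s by rw [hx]; ring]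
    exact Ideal.mul_mem_mul ha hσ
  obtain ⟨p, hp, hpa⟩ := Ideal.mem_span_singleton_mul.1 haτ
  obtain ⟨q, hq, hqa⟩ := Ideal.mem_span_singleton_mul.1 haσ
  have hx' : algebraMap R F x ≠ 0 := (FaithfulSMul.algebraMap_eq_zero_iff R F).not.2 hx0
  have hy' : algebraMap R F y ≠ 0 := (FaithfulSMul.algebraMap_eq_zero_iff R F).not.2 hy0
  have hpa' : algebraMap R F y * algebraMap R F p = algebraMap R F a * algebraMap R F τ := by
    rw [← map_mul, ← map_mul, hpa]
  have hqa' : algebraMap R F x * algebraMap R F q = algebraMap R F a * algebraMap R F σ := by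
    rw [← map_mul, ← map_mul, hqa]
  have key : a • ((algebraMap R F σ / algebraMap R F x) • v₁ -
      (algebraMap R F τ / algebraMap R F y) • v₀) = (-p) • v₀ + q • v₁ := by
    match_scalars
    · field_simp
      linear_combination -hqa'
    · field_simp
      linear_combination hpa'
  rw [key]
  exact add_mem (mem_sup_left (mem_smul_span_singleton.2 ⟨-p, neg_mem hp, rfl⟩))
    (mem_sup_right (mem_smul_span_singleton.2 ⟨q, hq, rfl⟩))

variable [IsDedekindDomain R]

theorem exists_smul_span_sup_smul_span_eq {c₀ c₁ : Ideal R} (h₀ : c₀ ≠ ⊥) (h₁ : c₁ ≠ ⊥)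
    (v₀ v₁ : V) : ∃ (x y : R) (α β : F), c₀ • span R {v₀} ⊔ c₁ • span R {v₁} =
      span R {x • v₀ + y • v₁} ⊔ (c₀ * c₁) • span R {α • v₀ + β • v₁} := by
  obtain ⟨x, hx, hx0⟩ := exists_mem_ne_zero_of_ne_bot h₀
  obtain ⟨s, hs⟩ := Ideal.dvd_span_singleton.2 hx
  have hs0 : s ≠ ⊥ := by
    rintro rfl
    rw [Ideal.mul_bot, Ideal.span_singleton_eq_bot] at hs
    exact hx0 hs
  obtain ⟨y, hy0, t, ht, hst⟩ := Ideal.exists_span_singleton_eq_mul_sup_eq_top h₁ hs0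
  have hy : y ∈ c₁ := Ideal.dvd_span_singleton.1 ⟨t, ht⟩
  obtain ⟨σ, hσ, τ, hτ, hστ⟩ := mem_sup.1 (hst ▸ mem_top : (1 : R) ∈ s ⊔ t)
  -- The change of basis from `(v₀, v₁)` has determinant `x β - y α = σ + τ = 1`.
  refine ⟨x, y, -(algebraMap R F τ / algebraMap R F y), algebraMap R F σ / algebraMap R F x, ?_⟩
  rw [neg_smul, ← sub_eq_neg_add]
  refine le_antisymm (sup_le ?_ ?_) (sup_le ?_ ?_)
  · exact ideal_smul_span_le_span_sup_mul_smul_span hs hy hσ hστ hx0 hy0 v₀ v₁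
  · have := ideal_smul_span_le_span_sup_mul_smul_span (F := F) ht hx hτ
      (by rw [add_comm, hστ]) hy0 hx0 v₁ v₀
    rwa [add_comm (y • v₁), mul_comm c₁, ← neg_sub, ← Set.neg_singleton, span_neg] at this
  · rw [span_singleton_le_iff_mem]
    exact add_mem (mem_sup_left (mem_smul_span_singleton.2 ⟨x, hx, rfl⟩))
      (mem_sup_right (mem_smul_span_singleton.2 ⟨y, hy, rfl⟩))
  · exact mul_smul_span_le_ideal_smul_span_sup hs ht hσ hτ hx0 hy0 v₀ v₁

end Steinitz

section Lattice

variable {R V : Type*} [CommRing R] [IsDedekindDomain R] [AddCommGroup V] [Module R V]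

theorem exists_iSup_ideal_smul_span_eq_span_sup (F : Type*) [Field F] [Algebra R F]
    [FaithfulSMul R F] [Module F V] [IsScalarTower R F V] {m : ℕ} (c : Fin (m + 1) → Ideal R)
    (hc : ∀ i, c i ≠ ⊥) (v : Fin (m + 1) → V) : ∃ (w : Fin m → V) (z : V),
      ⨆ i, c i • span R {v i} = span R (Set.range w) ⊔ (∏ i, c i) • span R {z} := by
  induction m with
  | zero => exact ⟨![], v 0, by simp⟩
  | succ m ih =>
    obtain ⟨w, z, hwz⟩ := ih (fun i => c i.succ) (fun i => hc i.succ) (fun i => v i.succ)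
    have hprod : ∏ i : Fin (m + 1), c i.succ ≠ ⊥ := prod_ne_zero_iff.2 fun i _ => hc i.succ
    obtain ⟨x, y, α, β, h⟩ := exists_smul_span_sup_smul_span_eq (F := F) (hc 0) hprod (v 0) z
    refine ⟨Fin.cons (x • v 0 + y • z) w, α • v 0 + β • z, ?_⟩
    rw [iSup_fin_succ, hwz, sup_left_comm, h, Fin.prod_univ_succ c, Fin.range_cons, span_insert]
    ac_rfl

theorem exists_span_range_eq_iSup_ideal_smul_span (F : Type*) [Field F] [Algebra R F]
    [FaithfulSMul R F] [Module F V] [IsScalarTower R F V] {m : ℕ} {c : Fin m → Ideal R}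
    (hc : ∀ i, c i ≠ ⊥) (hprinc : (∏ i, c i).IsPrincipal) (v : Fin m → V) :
    ∃ w : Fin m → V, span R (Set.range w) = ⨆ i, c i • span R {v i} := by
  cases m with
  | zero => exact ⟨![], by simp [iSup_of_empty]⟩
  | succ m =>
    obtain ⟨w, z, h⟩ := exists_iSup_ideal_smul_span_eq_span_sup F c hc v
    obtain ⟨g, hg⟩ := hprinc
    refine ⟨Fin.cons (g • z) w, ?_⟩
    rw [h, hg, ← Ideal.span, Submodule.ideal_span_singleton_smul, smul_span, Set.smul_set_singleton,
      Fin.range_cons, span_insert, sup_comm]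

end Lattice

section Coordinates

variable {R K : Type*} [CommRing R] [CommRing K] [Algebra R K] {n : ℕ}

theorem iSup_ideal_smul_span_single_le_pi (e : Fin n → Ideal R) :
    ⨆ i, e i • span R {Pi.single i (1 : K)} ≤
      pi Set.univ fun i => Submodule.map (Algebra.linearMap R K) (e i) := by
  refine iSup_le fun j => ?_
  intro z hz i _
  obtain ⟨a, ha, rfl⟩ := mem_smul_span_singleton.1 hz
  rcases eq_or_ne i j with rfl | hij
  · exact ⟨a, ha, by simp [Algebra.smul_def]⟩
  · simpa [hij] using ⟨0, zero_mem _, map_zero _⟩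

variable [FaithfulSMul R K]

theorem exists_matrix_mul_eq_diagonal_of_span_eq {e : Fin n → Ideal R} {w : Fin n → Fin n → K}
    (hw : span R (Set.range w) = ⨆ i, e i • span R {Pi.single i 1}) :
    ∃ M : Matrix (Fin n) (Fin n) R, (∀ i j, M i j ∈ e i) ∧
      ∀ d : Fin n → R, (∀ i, d i ∈ e i) → ∃ N, M * N = diagonal d := by
  have hcoord (j i : Fin n) : ∃ a ∈ e i, algebraMap R K a = w j i :=
    iSup_ideal_smul_span_single_le_pi e (hw ▸ subset_span (Set.mem_range_self j)) i (Set.mem_univ i)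
  choose a hae haw using hcoord
  refine ⟨of fun i j => a j i, fun i j => hae j i, fun d hd => ?_⟩
  have hcol (j : Fin n) : ∃ c : Fin n → R, ∑ t, c t • w t = d j • Pi.single j 1 :=
    (mem_span_range_iff_exists_fun R).1
      (hw ▸ mem_iSup_of_mem j (mem_smul_span_singleton.2 ⟨d j, hd j, rfl⟩))
  choose c hc using hcol
  refine ⟨of fun t j => c j t, ext fun i j => FaithfulSMul.algebraMap_injective R K ?_⟩
  have := congrFun (hc j) i
  simp only [Finset.sum_apply, Pi.smul_apply, Pi.single_apply] at this
  simp only [mul_apply, of_apply, map_sum, map_mul, haw, diagonal_apply]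
  rw [apply_ite (algebraMap R K), map_zero]
  simp_rw [mul_comm _ (algebraMap R K _), ← Algebra.smul_def, this]
  split_ifs with hij <;> simp [hij, Algebra.smul_def]

end Coordinates

/-- Existence of unimodular matrices with prescribed elementary divisors:
over the ring of integers `Λ = 𝓞 K` of a number field, given nonzero integral
ideals `e₀ ∣ e₁ ∣ … ∣ e_{n-1}`, there is an invertible integral matrix whose
`k`-th determinantal divisor is `e₀ ⋯ e_{k-1}` for every `k` if and only if
the product `e₀ ⋯ e_{n-1}` is principal. -/
theorem stmt7 (K : Type*) [Field K] [NumberField K]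
    (n : ℕ) (e : Fin n → Ideal (𝓞 K))
    (he : ∀ i, e i ≠ 0)
    (hchain : ∀ i j : Fin n, i ≤ j → e i ∣ e j) :
    (∃ M : Matrix (Fin n) (Fin n) (𝓞 K), M.det ≠ 0 ∧
      ∀ k : Fin n, detDiv (k.1 + 1) M = ∏ i ∈ Finset.Iic k, e i) ↔
    (∏ i, e i).IsPrincipal := by
  refine ⟨fun ⟨M, _, hM⟩ => isPrincipal_prod_of_detDiv_succ_eq hM, fun hprinc => ?_⟩
  obtain ⟨w, hw⟩ :=
    exists_span_range_eq_iSup_ideal_smul_span K he hprinc fun i => Pi.single i (1 : K)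
  obtain ⟨M, hMe, hMd⟩ := exists_matrix_mul_eq_diagonal_of_span_eq hw
  have hanti : Antitone e := fun i j hij => Ideal.le_of_dvd (hchain i j hij)
  exact ⟨M, det_ne_zero_of_forall_exists_mul_eq_diagonal he hMd,
    detDiv_succ_eq_prod_Iic hanti hMe hMd⟩
end

section
/- Let Λ be a Dedekind domain with fraction field Ω and ι an involution; suppose every hermitian invertible H ∈ Matₙ(Ω) admits a coprime fraction H' = A₀⁻¹B₀ with A₀, B₀ ∈ Matₙ(Λ) invertible. Then for every hermitian pair (A, B) over Λ with A invertible over Ω there exists an associated coprime hermitian pair (A', B'), i.e., A', B' ∈ Matₙ(Λ) with A' B* = B' A* and (A' | B') having trivial elementary divisors. -/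
/-!
Over `Ω` the pair `(A, B)` has the hermitian fraction `H = A⁻¹B`, and every pair `(A', B')` with
`A' H = B'` is associated with `(A, B)`. If `A` is invertible over `Λ`, `(A, B)` itself is
coprime. Otherwise `Λ` is not a field, hence infinite, and so is the set of `ι`-fixed elements;
some fixed `c` then makes `H + c` invertible and still hermitian. Its coprime fraction
`H + c = A₀⁻¹B₀` yields the pair `(A₀, B₀ - c A₀)` with fraction `H`, and coprimality survives
the shift because `(A₀ | B₀) = (A₀ | B₀ - c A₀) · [[1, c], [0, 1]]` and, by Cauchy–Binet, the
maximal minors of a product lie in the ideal of maximal minors of its left factor.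
-/

open Matrix Polynomial Function

section Minors

variable {R : Type*} [CommRing R] {m ι κ : Type*} [Fintype m] [DecidableEq m]

def minorIdeal (M : Matrix m ι R) : Ideal R :=
  Ideal.span {d | ∃ g : m → ι, Injective g ∧ d = (M.submatrix id g).det}

lemma det_mul_eq_sum_det_submatrix [Fintype ι] (M : Matrix m ι R) (Q : Matrix ι m R) :
    (M * Q).det = ∑ f : m → ι, (∏ i, Q (f i) i) * (M.submatrix id f).det := by
  have hcols : (M * Q)ᵀ = fun i => ∑ k, Q k i • Mᵀ k := by
    ext i j
    simp [Matrix.mul_apply, mul_comm]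
  rw [← det_transpose, hcols]
  change (detRowAlternating (R := R) (n := m)).toMultilinearMap
    (fun i => ∑ k, Q k i • Mᵀ k) = _
  rw [MultilinearMap.map_sum]
  refine Finset.sum_congr rfl fun f _ => ?_
  rw [MultilinearMap.map_smul_univ, smul_eq_mul]
  exact congrArg _ (det_transpose (M.submatrix id f))

lemma det_mul_mem_minorIdeal [Fintype ι] (M : Matrix m ι R) (Q : Matrix ι m R) :
    (M * Q).det ∈ minorIdeal M := by
  rw [det_mul_eq_sum_det_submatrix]
  refine Ideal.sum_mem _ fun f _ => Ideal.mul_mem_left _ _ ?_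
  by_cases hf : Injective f
  · exact Ideal.subset_span ⟨f, hf, rfl⟩
  · obtain ⟨i, j, hij, hne⟩ : ∃ i j, f i = f j ∧ i ≠ j := by
      simpa [Injective] using hf
    rw [det_zero_of_column_eq hne fun k => by simp [hij]]
    exact zero_mem _

lemma minorIdeal_mul_le [Fintype ι] (M : Matrix m ι R) (P : Matrix ι κ R) :
    minorIdeal (M * P) ≤ minorIdeal M := by
  refine Ideal.span_le.2 ?_
  rintro _ ⟨g, -, rfl⟩
  exact det_mul_mem_minorIdeal M (P.submatrix id g)

lemma minorIdeal_fromCols_eq_top {n : Type*} {A : Matrix m m R} (hA : IsUnit A.det)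
    (B : Matrix m n R) : minorIdeal (fromCols A B) = ⊤ :=
  Ideal.eq_top_of_isUnit_mem _ (Ideal.subset_span ⟨Sum.inl, Sum.inl_injective, rfl⟩) hA

lemma minorIdeal_fromCols_le_fromCols_sub_mul {n : Type*} [Fintype n] [DecidableEq n]
    (A B : Matrix m n R) (L : Matrix n n R) :
    minorIdeal (fromCols A B) ≤ minorIdeal (fromCols A (B - A * L)) := by
  have : fromCols A B =
      fromCols A (B - A * L) * (fromBlocks 1 L 0 1 : Matrix (n ⊕ n) (n ⊕ n) R) := by
    rw [fromCols_mul_fromBlocks]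
    simp
  rw [this]
  exact minorIdeal_mul_le _ _

end Minors

lemma infinite_fixedPoints_of_involutive {R : Type*} [CommRing R] [IsDomain R] [Infinite R]
    {ι : R →+* R} (hι : Involutive ι) : (fixedPoints ι).Infinite := by
  intro hfin
  have hroots : ∀ p q : R, {x | (X ^ 2 - C p * X + C q : R[X]).IsRoot x}.Finite := fun p q =>
    finite_setOfPred_isRoot fun h => by simpa using congrArg (coeff · 2) h
  -- every `a` is a root of `X² - (a + ι a) X + a ι a`, whose coefficients are fixed by `ι`
  have hcover : (Set.univ : Set R) ⊆ ⋃ p ∈ fixedPoints ι, ⋃ q ∈ fixedPoints ι,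
      {x | (X ^ 2 - C p * X + C q : R[X]).IsRoot x} := fun a _ => by
    simp only [Set.mem_iUnion]
    refine ⟨a + ι a, by simp [IsFixedPt, hι a, add_comm], a * ι a,
      by simp [IsFixedPt, hι a, mul_comm], ?_⟩
    simp only [Set.mem_ofPred_eq, IsRoot, eval_add, eval_sub, eval_pow, eval_mul, eval_C, eval_X]
    ring
  exact Set.infinite_univ
    ((hfin.biUnion fun p _ => hfin.biUnion fun q _ => hroots p q).subset hcover)

lemma infinite_of_not_isUnit {R : Type*} [CommRing R] [IsDomain R] {a : R} (ha : a ≠ 0)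
    (hu : ¬IsUnit a) : Infinite R := by
  by_contra hfin
  have := not_infinite_iff_finite.1 hfin
  obtain ⟨b, hb⟩ := (Finite.isField_of_domain R).mul_inv_cancel ha
  exact hu (.of_mul_eq_one b hb)

lemma exists_det_add_smul_one_ne_zero {R n : Type*} [CommRing R] [IsDomain R] [Fintype n]
    [DecidableEq n] (M : Matrix n n R) {S : Set R} (hS : S.Infinite) :
    ∃ x ∈ S, (M + x • 1).det ≠ 0 := by
  have hroots : {x | (-M).charpoly.IsRoot x}.Finite :=
    finite_setOfPred_isRoot (charpoly_monic _).ne_zero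
  obtain ⟨x, hxS, hx⟩ := (hS.sdiff hroots).nonempty
  refine ⟨x, hxS, fun h => hx ?_⟩
  rw [Set.mem_ofPred_eq, IsRoot, eval_charpoly, sub_neg_eq_add, add_comm, scalar_apply,
    ← smul_one_eq_diagonal, h]

lemma isUnit_det_map_of_injective {R K n : Type*} [CommRing R] [Field K] [Fintype n]
    [DecidableEq n] {φ : R →+* K} (hφ : Injective φ) {X : Matrix n n R} (hX : X.det ≠ 0) :
    IsUnit (X.map φ).det := by
  rw [← RingHom.mapMatrix_apply, ← RingHom.map_det]
  exact isUnit_iff_ne_zero.2 ((map_ne_zero_iff φ hφ).2 hX)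

lemma map_transpose_map_comm {R S m n : Type*} (φ : R → S) (σR : R → R) (σS : S → S)
    (h : ∀ x, σS (φ x) = φ (σR x)) (X : Matrix m n R) :
    ((X.map σR)ᵀ).map φ = ((X.map φ).map σS)ᵀ := by
  ext
  simp [h]

lemma map_transpose_add_smul_one {R n : Type*} [CommRing R] [DecidableEq n] {σ : R →+* R}
    {H : Matrix n n R} (hH : (H.map σ)ᵀ = H) {a : R} (ha : σ a = a) :
    ((H + a • 1).map σ)ᵀ = H + a • 1 := by
  rw [Matrix.map_add _ (map_add σ), transpose_add, hH]
  congr 1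
  ext i j
  by_cases hij : i = j <;> simp [one_apply, hij, Ne.symm, ha]

section HermitianPair

variable {R : Type*} [CommRing R] {n : Type*} [Fintype n] [DecidableEq n] {σ : R →+* R}
  {A B H : Matrix n n R}

lemma mul_map_transpose_of_mul_eq (hAB : A * (B.map σ)ᵀ = B * (A.map σ)ᵀ) (hA : IsUnit A.det)
    (hAH : A * H = B) : H * (A.map σ)ᵀ = (B.map σ)ᵀ :=
  ((isUnit_iff_isUnit_det A).2 hA).mul_left_cancel <| by rw [← mul_assoc, hAH, hAB]

lemma map_transpose_eq_self_of_mul_eq (hAB : A * (B.map σ)ᵀ = B * (A.map σ)ᵀ)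
    (hA : IsUnit A.det) (hAH : A * H = B) : (H.map σ)ᵀ = H := by
  have hA' : IsUnit (A.map σ)ᵀ := by
    rw [isUnit_iff_isUnit_det, det_transpose, ← RingHom.mapMatrix_apply, ← RingHom.map_det]
    exact hA.map σ
  refine hA'.mul_right_cancel ?_
  rw [mul_map_transpose_of_mul_eq hAB hA hAH, ← transpose_mul, ← Matrix.map_mul, hAH]

lemma mul_map_transpose_eq_of_mul_eq (hAB : A * (B.map σ)ᵀ = B * (A.map σ)ᵀ)
    (hA : IsUnit A.det) (hAH : A * H = B) {A' B' : Matrix n n R} (hA'H : A' * H = B') :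
    A' * (B.map σ)ᵀ = B' * (A.map σ)ᵀ := by
  rw [← hA'H, mul_assoc, mul_map_transpose_of_mul_eq hAB hA hAH]

end HermitianPair

theorem stmt16_general (Λ : Type*) [CommRing Λ] [IsDedekindDomain Λ]
    (ιΛ : Λ →+* Λ) (hιΛ : ∀ x, ιΛ (ιΛ x) = x)
    (ιΩ : FractionRing Λ →+* FractionRing Λ)
    (hcomp : ∀ x : Λ, ιΩ (algebraMap Λ (FractionRing Λ) x)
      = algebraMap Λ (FractionRing Λ) (ιΛ x))
    (n : ℕ)
    (coprime : Matrix (Fin n) (Fin n) Λ → Matrix (Fin n) (Fin n) Λ → Prop)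
    (hcoprime : ∀ X Y, coprime X Y ↔
      Ideal.span { d : Λ | ∃ g : Fin n → (Fin n ⊕ Fin n), Function.Injective g ∧
        d = (((Matrix.of fun i => Sum.elim (X i) (Y i) :
          Matrix (Fin n) (Fin n ⊕ Fin n) Λ)).submatrix id g).det } = ⊤)
    (hfrac : ∀ H : Matrix (Fin n) (Fin n) (FractionRing Λ),
      (H.map ιΩ)ᵀ = H → H.det ≠ 0 →
      ∃ A₀ B₀ : Matrix (Fin n) (Fin n) Λ, A₀.det ≠ 0 ∧ B₀.det ≠ 0 ∧
        H = (A₀.map (algebraMap Λ (FractionRing Λ)))⁻¹ *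
          (B₀.map (algebraMap Λ (FractionRing Λ))) ∧ coprime A₀ B₀) :
    ∀ A B : Matrix (Fin n) (Fin n) Λ,
      A * ((B.map ιΛ)ᵀ) = B * ((A.map ιΛ)ᵀ) → A.det ≠ 0 →
      ∃ A' B' : Matrix (Fin n) (Fin n) Λ,
        A' * ((B.map ιΛ)ᵀ) = B' * ((A.map ιΛ)ᵀ) ∧ coprime A' B' := by
  intro A B hAB hA
  by_cases hAunit : IsUnit A.det
  · exact ⟨A, B, hAB, (hcoprime A B).2 (minorIdeal_fromCols_eq_top hAunit B)⟩
  set φ := algebraMap Λ (FractionRing Λ)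
  have hφ : Injective φ := IsFractionRing.injective Λ (FractionRing Λ)
  have hstar := map_transpose_map_comm (m := Fin n) (n := Fin n) φ ιΛ ιΩ hcomp
  have hABΩ : A.map φ * ((B.map φ).map ιΩ)ᵀ = B.map φ * ((A.map φ).map ιΩ)ᵀ := by
    simpa only [Matrix.map_mul, hstar] using congrArg (·.map φ) hAB
  have hAΩ := isUnit_det_map_of_injective hφ hA
  set H := (A.map φ)⁻¹ * B.map φ
  have hAH : A.map φ * H = B.map φ := mul_nonsing_inv_cancel_left _ _ hAΩ
  have : Infinite Λ := infinite_of_not_isUnit hA hAunit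
  obtain ⟨_, ⟨c, hc, rfl⟩, hdet⟩ := exists_det_add_smul_one_ne_zero H
    ((infinite_fixedPoints_of_involutive hιΛ).image hφ.injOn)
  have hHc := map_transpose_add_smul_one (map_transpose_eq_self_of_mul_eq hABΩ hAΩ hAH)
    ((hcomp c).trans (congrArg φ hc.eq))
  obtain ⟨A₀, B₀, hA₀, -, hfac, hcop⟩ := hfrac _ hHc hdet
  have hA₀H : A₀.map φ * H = (B₀ - c • A₀).map φ := by
    have hsub : (B₀ - c • A₀).map φ = B₀.map φ - φ c • A₀.map φ := by ext; simp
    rw [hsub, ← mul_nonsing_inv_cancel_left _ (B₀.map φ) (isUnit_det_map_of_injective hφ hA₀),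
      ← hfac, mul_add, mul_smul_one, add_sub_cancel_right]
  have hshift := minorIdeal_fromCols_le_fromCols_sub_mul A₀ B₀ (c • 1)
  rw [Matrix.mul_smul, mul_one] at hshift
  refine ⟨A₀, B₀ - c • A₀, map_injective hφ ?_,
    (hcoprime _ _).2 (top_unique (((hcoprime A₀ B₀).1 hcop).ge.trans hshift))⟩
  simpa only [Matrix.map_mul, hstar] using
    mul_map_transpose_eq_of_mul_eq hABΩ hAΩ hAH hA₀H

/-- Existence of associated coprime hermitian pairs.  `Λ` is a Dedekind
domain with involution `ιΛ`, extended to an involution `ιΩ` of the fraction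
field `Ω`.  A pair `(A, B)` is hermitian if `A B* = B A*`, coprime if the
ideal of the `n × n` minors of `(A | B)` is all of `Λ`, and `(A', B')` is
associated to `(A, B)` if `A' B* = B' A*`.  Assuming every invertible
hermitian `H ∈ Matₙ(Ω)` admits a coprime fraction `H = A₀⁻¹ B₀`, every
hermitian pair `(A, B)` with `A` invertible over `Ω` admits an associated
coprime hermitian pair. -/
theorem stmt16 (Λ : Type*) [CommRing Λ] [IsDedekindDomain Λ]
    (ιΛ : Λ →+* Λ) (hιΛ : ∀ x, ιΛ (ιΛ x) = x)
    (ιΩ : FractionRing Λ →+* FractionRing Λ) (hιΩ : ∀ x, ιΩ (ιΩ x) = x)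
    (hcomp : ∀ x : Λ, ιΩ (algebraMap Λ (FractionRing Λ) x)
      = algebraMap Λ (FractionRing Λ) (ιΛ x))
    (n : ℕ)
    (coprime : Matrix (Fin n) (Fin n) Λ → Matrix (Fin n) (Fin n) Λ → Prop)
    (hcoprime : ∀ X Y, coprime X Y ↔
      Ideal.span { d : Λ | ∃ g : Fin n → (Fin n ⊕ Fin n), Function.Injective g ∧
        d = (((Matrix.of fun i => Sum.elim (X i) (Y i) :
          Matrix (Fin n) (Fin n ⊕ Fin n) Λ)).submatrix id g).det } = ⊤)
    (hfrac : ∀ H : Matrix (Fin n) (Fin n) (FractionRing Λ),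
      (H.map ιΩ)ᵀ = H → H.det ≠ 0 →
      ∃ A₀ B₀ : Matrix (Fin n) (Fin n) Λ, A₀.det ≠ 0 ∧ B₀.det ≠ 0 ∧
        H = (A₀.map (algebraMap Λ (FractionRing Λ)))⁻¹ *
          (B₀.map (algebraMap Λ (FractionRing Λ))) ∧ coprime A₀ B₀) :
    ∀ A B : Matrix (Fin n) (Fin n) Λ,
      A * ((B.map ιΛ)ᵀ) = B * ((A.map ιΛ)ᵀ) → A.det ≠ 0 →
      ∃ A' B' : Matrix (Fin n) (Fin n) Λ,
        A' * ((B.map ιΛ)ᵀ) = B' * ((A.map ιΛ)ᵀ) ∧ coprime A' B' :=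
  stmt16_general Λ ιΛ hιΛ ιΩ hcomp n coprime hcoprime hfrac
end
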